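/- arXiv:2111.08905 — 2 statements merged into one kernel-verified Lean document; each statement's English description precedes it below -/
import Mathlib

section
/- Let (tᵢ)ᵢ∈ℕ be nonnegative reals with ∑ᵢ tᵢ = 1, and let (αᵢ)ᵢ∈ℕ be complex numbers. Then ∑_{i≠j} tᵢtⱼ(log⁺|αᵢ| + log⁺|αⱼ| − log|αᵢ−αⱼ|) + 2∑ᵢ tᵢ² log⁺|αᵢ| ≥ −log 2, where terms with αᵢ = αⱼ in the first sum are omitted. -/
/-!
The triangle inequality `‖a - b‖ ≤ ‖a‖ + ‖b‖` gives
`log ‖a - b‖ ≤ log⁺ ‖a‖ + log⁺ ‖b‖ + log 2`, so every off-diagonal term is at least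
`-log 2 · tᵢ tⱼ`, while the diagonal terms are nonnegative. Summing against the
product weights `tᵢ tⱼ`, whose total mass is `(∑ tᵢ)² = 1`, gives the bound.
-/

open Real

lemma Real.log_norm_sub_le_posLog_add {E : Type*} [SeminormedAddCommGroup E] (a b : E) :
    log ‖a - b‖ ≤ log⁺ ‖a‖ + log⁺ ‖b‖ + log 2 :=
  calc log ‖a - b‖ ≤ log⁺ ‖a + -b‖ := by rw [← sub_eq_add_neg]; exact le_max_right _ _
    _ ≤ log⁺ ‖a‖ + log⁺ ‖b‖ + log 2 := by simpa only [norm_neg] using posLog_norm_add_le a (-b)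

lemma summable_of_tsum_eq_one {ι : Type*} {w : ι → ℝ} (hw : ∑' i, w i = 1) : Summable w := by
  by_contra h
  simp [tsum_eq_zero_of_not_summable h] at hw

lemma tsum_mul_prod_eq_one {ι : Type*} {t : ι → ℝ} (ht : ∀ i, 0 ≤ t i)
    (hsum : ∑' i, t i = 1) : ∑' p : ι × ι, t p.1 * t p.2 = 1 := by
  have hts := summable_of_tsum_eq_one hsum
  rw [← hts.tsum_mul_tsum hts (hts.mul_of_nonneg hts ht ht), hsum, one_mul]

/-- `c ≤ 0` covers the case of a non-summable `f`, whose `tsum` is the junk value `0`. -/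
lemma le_tsum_of_forall_mul_le {ι : Type*} {w f : ι → ℝ} {c : ℝ} (hc : c ≤ 0)
    (hw : ∑' i, w i = 1) (h : ∀ i, c * w i ≤ f i) : c ≤ ∑' i, f i := by
  by_cases hf : Summable f
  · calc c = ∑' i, c * w i := by rw [tsum_mul_left, hw, mul_one]
      _ ≤ ∑' i, f i := ((summable_of_tsum_eq_one hw).mul_left c).tsum_le_tsum h hf
  · rwa [tsum_eq_zero_of_not_summable hf]

/-- The archimedean energy pairing of the standard measure against a discrete
probability measure `∑ tᵢ δ_{αᵢ}` is bounded below by `−log 2`. -/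
theorem archimedean_energy_pairing_lower_bound
    (t : ℕ → ℝ) (ht : ∀ i, 0 ≤ t i) (hsum : ∑' i, t i = 1) (α : ℕ → ℂ) :
    (∑' p : ℕ × ℕ,
        if p.1 ≠ p.2 ∧ α p.1 ≠ α p.2 then
          t p.1 * t p.2 *
            (max (Real.log (‖α p.1‖)) 0
              + max (Real.log (‖α p.2‖)) 0
              - Real.log (‖α p.1 - α p.2‖))
        else 0)
      + 2 * ∑' i, (t i) ^ 2 * max (Real.log (‖α i‖)) 0
      ≥ -Real.log 2 := by
  have hlog2 : 0 ≤ log 2 := log_nonneg one_le_two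
  refine (le_tsum_of_forall_mul_le (neg_nonpos.2 hlog2) (tsum_mul_prod_eq_one ht hsum)
    fun p => ?_).trans (le_add_of_nonneg_right ?_)
  · have hw : 0 ≤ t p.1 * t p.2 := mul_nonneg (ht _) (ht _)
    split_ifs
    · have key : log ‖α p.1 - α p.2‖ ≤ max (log ‖α p.1‖) 0 + max (log ‖α p.2‖) 0 + log 2 := by
        simpa only [posLog_apply, max_comm] using log_norm_sub_le_posLog_add (α p.1) (α p.2)
      linarith [mul_nonneg hw (sub_nonneg.2 key)]
    · exact mul_nonpos_of_nonpos_of_nonneg (neg_nonpos.2 hlog2) hw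
  · exact mul_nonneg two_pos.le <| tsum_nonneg fun i => mul_nonneg (sq_nonneg _) (le_max_right _ _)
end

section
/- For any ε > 0 and any z ∈ ℂ, |∫₀¹ log⁺|z + ε·e^{2πit}| dt − log⁺|z|| ≤ ε. -/
/-!
`log⁺` is 1-Lipschitz on `ℝ`: it is `log` composed with `x ↦ max 1 |x|`, and `log` is 1-Lipschitz
on `[1, ∞)`. Every point of the circle of radius `ε` about `z` has modulus within `ε` of `‖z‖`,
so the integrand stays within `ε` of `log⁺ ‖z‖`, and hence so does its average.
-/

open Real Complex

lemma Real.log_sub_log_le_abs_sub {x y : ℝ} (hx : 0 < x) (hy : 1 ≤ y) :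
    log x - log y ≤ |x - y| := by
  have hy₀ : 0 < y := one_pos.trans_le hy
  calc log x - log y = log (x / y) := (log_div hx.ne' hy₀.ne').symm
    _ ≤ x / y - 1 := log_le_sub_one_of_pos (div_pos hx hy₀)
    _ = (x - y) / y := by field_simp
    _ ≤ |x - y| / y := by gcongr; exact le_abs_self _
    _ ≤ |x - y| := div_le_self (abs_nonneg _) hy

lemma Real.lipschitzWith_one_posLog : LipschitzWith 1 posLog := by
  refine LipschitzWith.of_le_add fun x y => ?_
  rw [← posLog_abs x, ← posLog_abs y, posLog_eq_log_max_one (abs_nonneg x),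
    posLog_eq_log_max_one (abs_nonneg y), Real.dist_eq]
  have hmax : |(max 1 |x|) - (max 1 |y|)| ≤ |x - y| := by
    rw [max_comm 1, max_comm 1]
    exact (abs_max_sub_max_le_abs _ _ _).trans (abs_abs_sub_abs_le_abs_sub x y)
  linarith [log_sub_log_le_abs_sub (one_pos.trans_le (le_max_left 1 |x|)) (le_max_left 1 |y|)]

lemma intervalIntegral.norm_integral_sub_smul_le {E : Type*} [NormedAddCommGroup E]
    [NormedSpace ℝ E] [CompleteSpace E] {f : ℝ → E} {a b C : ℝ} (c : E)
    (hf : IntervalIntegrable f MeasureTheory.volume a b) (h : ∀ t ∈ Set.uIoc a b, ‖f t - c‖ ≤ C) :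
    ‖(∫ t in a..b, f t) - (b - a) • c‖ ≤ C * |b - a| := by
  rw [← integral_const, ← integral_sub hf intervalIntegrable_const]
  exact norm_integral_le_of_norm_le_const h

lemma Complex.norm_ofReal_mul_exp_two_pi_I_mul (r t : ℝ) :
    ‖(r : ℂ) * exp (2 * π * I * t)‖ = |r| := by
  rw [norm_mul, norm_real, Real.norm_eq_abs, show 2 * π * I * t = ((2 * π * t : ℝ) : ℂ) * I by
    push_cast; ring, norm_exp_ofReal_mul_I, mul_one]

/-- The change of `log⁺` under averaging over the circle of radius `ε`:
`|∫₀¹ log⁺|z + ε·e^{2πit}| dt − log⁺|z|| ≤ ε`. -/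
theorem logplus_circle_average_close (ε : ℝ) (hε : 0 < ε) (z : ℂ) :
    |(∫ t in (0:ℝ)..1,
        max (Real.log (‖z + ε * Complex.exp (2 * Real.pi * Complex.I * t)‖)) 0)
      - max (Real.log (‖z‖)) 0| ≤ ε := by
  simp only [max_comm _ (0 : ℝ), ← posLog_apply]
  have hclose : ∀ t : ℝ, |log⁺ ‖z + ε * exp (2 * π * I * t)‖ - log⁺ ‖z‖| ≤ ε := fun t =>
    calc |log⁺ ‖z + ε * exp (2 * π * I * t)‖ - log⁺ ‖z‖|
        ≤ |‖z + ε * exp (2 * π * I * t)‖ - ‖z‖| := by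
          simpa [Real.dist_eq] using lipschitzWith_one_posLog.dist_le_mul _ _
      _ ≤ ‖z + ε * exp (2 * π * I * t) - z‖ := abs_norm_sub_norm_le _ _
      _ = ε := by rw [add_sub_cancel_left, norm_ofReal_mul_exp_two_pi_I_mul, abs_of_pos hε]
  have hcont : Continuous fun t : ℝ => log⁺ ‖z + ε * exp (2 * π * I * t)‖ := by fun_prop
  simpa using intervalIntegral.norm_integral_sub_smul_le (log⁺ ‖z‖)
    (hcont.intervalIntegrable 0 1) fun t _ => hclose t
end
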